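/- The joint distribution placing mass 1/6 on each of the six nonzero-payoff action profiles of the modified Shapley game (with 0 < ε < 1) cannot be written as a product of two independent marginal distributions, one for each player. -/

import Mathlib

/-! The support of a product distribution is a rectangle `supp p₁ × supp p₂`, whereas the
support of `qS` contains `(0, 0)` and `(1, 1)` but not the corner `(1, 0)`. -/

open Finset

noncomputable def qS : Fin 3 → Fin 3 → ℝ := fun a b =>
  if (a, b) ∈ ({(0,0), (0,1), (1,1), (1,2), (2,2), (2,0)} : Finset (Fin 3 × Fin 3))
  then 1/6 else 0

theorem apply_ne_zero_of_eq_mul {α β R : Type*} [MulZeroClass R] [NoZeroDivisors R]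
    {q : α → β → R} {p₁ : α → R} {p₂ : β → R} (hq : ∀ a b, q a b = p₁ a * p₂ b)
    {a a' : α} {b b' : β} (hab : q a b ≠ 0) (hab' : q a' b' ≠ 0) : q a' b ≠ 0 := by
  rw [hq] at hab hab' ⊢
  exact mul_ne_zero (left_ne_zero_of_mul hab') (right_ne_zero_of_mul hab)

theorem shapley_q_not_product_general :
    ¬ ∃ (p₁ p₂ : Fin 3 → ℝ),
      (∀ a, 0 ≤ p₁ a) ∧ (∑ a : Fin 3, p₁ a = 1) ∧
      (∀ b, 0 ≤ p₂ b) ∧ (∑ b : Fin 3, p₂ b = 1) ∧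
      (∀ a b, qS a b = p₁ a * p₂ b) := by
  rintro ⟨p₁, p₂, -, -, -, -, hprod⟩
  have h00 : qS 0 0 ≠ 0 := by simp [qS]
  have h11 : qS 1 1 ≠ 0 := by simp [qS]
  have h10 : qS 1 0 = 0 := by simp [qS]
  exact apply_ne_zero_of_eq_mul hprod h00 h11 h10

/-- The efficient joint distribution of the modified Shapley game (0 < ε < 1) is not a
product of independent marginal distributions. -/
theorem shapley_q_not_product (ε : ℝ) (hε0 : 0 < ε) (hε1 : ε < 1) :
    ¬ ∃ (p₁ p₂ : Fin 3 → ℝ),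
      (∀ a, 0 ≤ p₁ a) ∧ (∑ a : Fin 3, p₁ a = 1) ∧
      (∀ b, 0 ≤ p₂ b) ∧ (∑ b : Fin 3, p₂ b = 1) ∧
      (∀ a b, qS a b = p₁ a * p₂ b) :=
  shapley_q_not_product_general
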